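/- arXiv:2210.12371 — 2 statements merged into one kernel-verified Lean document; each statement's English description precedes it below -/
import Mathlib

section
/- If n is even, then the maximum number of 3-cycles among singular tournament matrices of order n is exactly (1/4)·C(n,3). -/
open scoped Classical
open Finset

/-- A tournament matrix: a (0,1)-matrix with `M + M.transpose = J - I`. -/
def IsTournament {ι : Type} [Fintype ι] [DecidableEq ι] (M : Matrix ι ι ℤ) : Prop :=
  (∀ i j, M i j = 0 ∨ M i j = 1) ∧
    M + M.transpose = Matrix.of (fun i j => if i = j then 0 else 1)

/-- The score (out-degree) of vertex `i`. -/
def score {ι : Type} [Fintype ι] (M : Matrix ι ι ℤ) (i : ι) : ℕ := (∑ j, M i j).toNat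

/-- The number of directed 3-cycles: ordered triples `i→j→k→i`, divided by 3. -/
noncomputable def C3 {ι : Type} [Fintype ι] [DecidableEq ι] (M : Matrix ι ι ℤ) : ℕ :=
  (Finset.univ.filter (fun p : ι × ι × ι =>
    M p.1 p.2.1 = 1 ∧ M p.2.1 p.2.2 = 1 ∧ M p.2.2 p.1 = 1)).card / 3

/-- Vertices `i` and `j` are strongly connected. -/
def SConn {ι : Type} [Fintype ι] (M : Matrix ι ι ℤ) (i j : ι) : Prop :=
  Relation.ReflTransGen (fun a b => M a b = 1) i j ∧
    Relation.ReflTransGen (fun a b => M a b = 1) j i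

/-- The strongly connected components (as vertex sets). -/
noncomputable def sccs {ι : Type} [Fintype ι] [DecidableEq ι] (M : Matrix ι ι ℤ) :
    Finset (Finset ι) :=
  Finset.univ.image (fun i => Finset.univ.filter (fun j => SConn M i j))

/-- The principal submatrix on a vertex set `V`. -/
def subm {ι : Type} [Fintype ι] [DecidableEq ι] (M : Matrix ι ι ℤ) (V : Finset ι) :
    Matrix {x // x ∈ V} {x // x ∈ V} ℤ :=
  M.submatrix Subtype.val Subtype.val

/-- A regular tournament: all scores equal. -/
def TRegular {ι : Type} [Fintype ι] (M : Matrix ι ι ℤ) : Prop :=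
  ∀ i j, score M i = score M j

/-- An almost regular tournament: scores differ by at most 1. -/
def TAlmostRegular {ι : Type} [Fintype ι] (M : Matrix ι ι ℤ) : Prop :=
  ∀ i j, score M i ≤ score M j + 1

/-- An upset tournament: a tournament on at least 3 vertices whose score vector is
`(1,1,2,3,…,n-3,n-2,n-2)`. -/
def IsUpset {ι : Type} [Fintype ι] [DecidableEq ι] (M : Matrix ι ι ℤ) : Prop :=
  IsTournament M ∧ 3 ≤ Fintype.card ι ∧
    Finset.univ.val.map (score M) =
      1 ::ₘ (Fintype.card ι - 2) ::ₘ (Multiset.range (Fintype.card ι - 2)).map (· + 1)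



section Core
variable {n : ℕ} {M : Matrix (Fin n) (Fin n) ℤ}

/-- entry facts -/
lemma hrel (hT : (M + M.transpose = Matrix.of (fun i j => if i = j then 0 else 1)))
    (i j : Fin n) : M i j + M j i = if i = j then 0 else 1 := by
  have := congrFun (congrFun hT i) j
  simpa [Matrix.add_apply, Matrix.transpose_apply] using this

lemma hdiag (hT : ∀ i j : Fin n, M i j + M j i = if i = j then 0 else 1) (i : Fin n) :
    M i i = 0 := by have := hT i i; simp at this; omega

lemma hcompl (hT : ∀ i j : Fin n, M i j + M j i = if i = j then 0 else 1) (k i : Fin n) :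
    M k i = (if k = i then 0 else 1) - M i k := by
  have := hT i k
  by_cases h : i = k <;> simp [h, eq_comm] at this ⊢ <;> omega

lemma hprod0 (h01 : ∀ i j : Fin n, M i j = 0 ∨ M i j = 1)
    (hT : ∀ i j : Fin n, M i j + M j i = if i = j then 0 else 1) (i j : Fin n) :
    M i j * M j i = 0 := by
  by_cases h : i = j
  · subst h; rw [hdiag hT]; ring
  · have := hT i j; rw [if_neg h] at this
    rcases h01 i j with h' | h' <;> rw [h'] <;> [ring; skip]
    have : M j i = 0 := by omega
    rw [this]; ring

lemma hsq (h01 : ∀ i j : Fin n, M i j = 0 ∨ M i j = 1) (i j : Fin n) :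
    M i j * M i j = M i j := by rcases h01 i j with h | h <;> rw [h] <;> ring
end Core

section Sums
variable {n : ℕ} {M : Matrix (Fin n) (Fin n) ℤ}

lemma sum_ite_ne (j : Fin n) : ∑ i : Fin n, (if i = j then (0:ℤ) else 1) = (n:ℤ) - 1 := by
  have h1 : ∑ i : Fin n, (if i = j then (1:ℤ) else 0) = 1 := by
    rw [Finset.sum_ite_eq' Finset.univ j (fun _ => (1:ℤ))]; simp
  have h2 : ∀ i : Fin n, (if i = j then (0:ℤ) else 1) = 1 - (if i = j then (1:ℤ) else 0) := by
    intro i; split_ifs <;> ring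
  rw [Finset.sum_congr rfl fun i _ => h2 i, Finset.sum_sub_distrib, h1, Finset.sum_const,
    Finset.card_univ, Fintype.card_fin]
  simp

lemma colsum (hT : ∀ i j : Fin n, M i j + M j i = if i = j then 0 else 1) (j : Fin n) :
    ∑ i, M i j = (n:ℤ) - 1 - ∑ i, M j i := by
  have h : ∑ i : Fin n, (M i j + M j i) = (n:ℤ) - 1 := by
    rw [Finset.sum_congr rfl (fun i _ => hT i j)]; exact sum_ite_ne j
  rw [Finset.sum_add_distrib] at h; linarith

lemma sumsc (hT : ∀ i j : Fin n, M i j + M j i = if i = j then 0 else 1) :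
    2 * ∑ i : Fin n, ∑ j, M i j = (n:ℤ) * ((n:ℤ) - 1) := by
  have h : ∑ j : Fin n, ∑ i, M i j = ∑ j : Fin n, ((n:ℤ) - 1 - ∑ i, M j i) :=
    Finset.sum_congr rfl fun j _ => colsum hT j
  rw [Finset.sum_comm] at h
  rw [Finset.sum_sub_distrib, Finset.sum_const, Finset.card_univ, Fintype.card_fin] at h
  simp at h
  linarith

lemma Tident (h01 : ∀ i j : Fin n, M i j = 0 ∨ M i j = 1)
    (hT : ∀ i j : Fin n, M i j + M j i = if i = j then 0 else 1) :
    2 * (∑ i : Fin n, ∑ j, ∑ k, M i j * M j k * M k i)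
      = (2*(n:ℤ) - 1) * (∑ i, ∑ j, M i j) - 3 * ∑ i, (∑ j, M i j) * (∑ j, M i j) := by
  -- U-part
  have hU : ∀ i j : Fin n, ∑ k, M i j * M j k * (if k = i then (0:ℤ) else 1)
      = M i j * (∑ k, M j k) := by
    intro i j
    have h2 : ∀ k, M i j * M j k * (if k = i then (0:ℤ) else 1)
        = M i j * M j k - (if k = i then M i j * M j k else 0) := by
      intro k; split_ifs <;> ring
    rw [Finset.sum_congr rfl fun k _ => h2 k, Finset.sum_sub_distrib,
      Finset.sum_ite_eq' Finset.univ i (fun k => M i j * M j k)]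
    have : M i j * M j i = 0 := by
      have := hprod0 h01 hT i j; linarith [this]
    simp [this, Finset.mul_sum]
  -- split T
  have hsplit : (∑ i : Fin n, ∑ j, ∑ k, M i j * M j k * M k i)
      = (∑ i : Fin n, ∑ j, M i j * (∑ k, M j k))
        - ∑ i : Fin n, ∑ j, ∑ k, M i j * M j k * M i k := by
    rw [← Finset.sum_sub_distrib]
    refine Finset.sum_congr rfl fun i _ => ?_
    rw [← Finset.sum_sub_distrib]
    refine Finset.sum_congr rfl fun j _ => ?_
    rw [← hU i j, ← Finset.sum_sub_distrib]
    refine Finset.sum_congr rfl fun k _ => ?_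
    rw [hcompl hT k i]; ring
  -- P-part
  have hPswap : (∑ i : Fin n, ∑ j, ∑ k, M i j * M j k * M i k)
      = ∑ i : Fin n, ∑ j, ∑ k, M i k * M k j * M i j := by
    refine Finset.sum_congr rfl fun i _ => ?_
    exact Finset.sum_comm
  have hP2 : 2 * (∑ i : Fin n, ∑ j, ∑ k, M i j * M j k * M i k)
      = (∑ i : Fin n, (∑ j, M i j) * (∑ j, M i j)) - ∑ i : Fin n, ∑ j, M i j := by
    rw [two_mul]
    nth_rewrite 2 [hPswap]
    rw [← Finset.sum_add_distrib, ← Finset.sum_sub_distrib]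
    refine Finset.sum_congr rfl fun i _ => ?_
    rw [← Finset.sum_add_distrib]
    have inner : ∀ j : Fin n, (∑ k, M i j * M j k * M i k) + (∑ k, M i k * M k j * M i j)
        = M i j * (∑ k, M i k) - M i j := by
      intro j
      rw [← Finset.sum_add_distrib]
      have h2 : ∀ k : Fin n, M i j * M j k * M i k + M i k * M k j * M i j
          = M i j * M i k * (if j = k then (0:ℤ) else 1) := by
        intro k; rw [← hT j k]; ring
      rw [Finset.sum_congr rfl fun k _ => h2 k]
      have h3 : ∀ k : Fin n, M i j * M i k * (if j = k then (0:ℤ) else 1)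
          = M i j * M i k - (if k = j then M i j * M i k else 0) := by
        intro k; simp only [eq_comm (a := j)]; split_ifs <;> ring
      rw [Finset.sum_congr rfl fun k _ => h3 k, Finset.sum_sub_distrib,
        Finset.sum_ite_eq' Finset.univ j (fun k => M i j * M i k), ← Finset.mul_sum]
      simp [hsq h01 i j]
    rw [Finset.sum_congr rfl fun j _ => inner j, Finset.sum_sub_distrib, ← Finset.sum_mul]
  -- U value
  have hUval : (∑ i : Fin n, ∑ j, M i j * (∑ k, M j k))
      = ∑ j : Fin n, ((n:ℤ) - 1 - ∑ k, M j k) * (∑ k, M j k) := by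
    rw [Finset.sum_comm]
    refine Finset.sum_congr rfl fun j _ => ?_
    rw [← Finset.sum_mul, colsum hT j]
  have hexp : ∑ j : Fin n, ((n:ℤ) - 1 - ∑ k, M j k) * (∑ k, M j k)
      = ((n:ℤ) - 1) * (∑ j : Fin n, ∑ k, M j k) - ∑ j : Fin n, (∑ k, M j k) * (∑ k, M j k) := by
    rw [Finset.mul_sum, ← Finset.sum_sub_distrib]
    exact Finset.sum_congr rfl fun j _ => by ring
  rw [hsplit]
  rw [mul_sub, hUval, hexp]
  linarith [hP2]
end Sums

section Main
variable {n : ℕ} {M : Matrix (Fin n) (Fin n) ℤ}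

lemma sqexpand :
    ∑ i : Fin n, (2 * (∑ j, M i j) - ((n:ℤ) - 1))^2
      = 4 * (∑ i, (∑ j, M i j) * (∑ j, M i j)) - 4*((n:ℤ)-1) * (∑ i, ∑ j, M i j)
        + (n:ℤ) * ((n:ℤ)-1)^2 := by
  have h : ∀ i : Fin n, (2 * (∑ j, M i j) - ((n:ℤ) - 1))^2
      = 4 * ((∑ j, M i j) * (∑ j, M i j)) - 4*((n:ℤ)-1) * (∑ j, M i j) + ((n:ℤ)-1)^2 := by
    intro i; ring
  rw [Finset.sum_congr rfl fun i _ => h i, Finset.sum_add_distrib, Finset.sum_sub_distrib,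
    ← Finset.mul_sum, ← Finset.mul_sum, Finset.sum_const, Finset.card_univ, Fintype.card_fin]
  push_cast
  ring

/-- The master identity: `8 T = n³ - n - 3 Σ dᵢ²`. -/
lemma master (h01 : ∀ i j : Fin n, M i j = 0 ∨ M i j = 1)
    (hT : ∀ i j : Fin n, M i j + M j i = if i = j then 0 else 1) :
    8 * (∑ i : Fin n, ∑ j, ∑ k, M i j * M j k * M k i)
      = (n:ℤ)^3 - n - 3 * ∑ i : Fin n, (2 * (∑ j, M i j) - ((n:ℤ) - 1))^2 := by
  have h1 := Tident h01 hT
  have h2 := sumsc hT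
  have h3 := sqexpand (M := M)
  linear_combination 4*h1 + 3*h3 + (4 - 2*(n:ℤ))*h2

lemma card_eq_T (h01 : ∀ i j : Fin n, M i j = 0 ∨ M i j = 1) :
    ((Finset.univ.filter (fun p : Fin n × Fin n × Fin n =>
        M p.1 p.2.1 = 1 ∧ M p.2.1 p.2.2 = 1 ∧ M p.2.2 p.1 = 1)).card : ℤ)
      = ∑ i : Fin n, ∑ j, ∑ k, M i j * M j k * M k i := by
  rw [← Finset.sum_boole]
  rw [Fintype.sum_prod_type]
  refine Finset.sum_congr rfl fun i _ => ?_
  rw [Fintype.sum_prod_type]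
  refine Finset.sum_congr rfl fun j _ => ?_
  refine Finset.sum_congr rfl fun k _ => ?_
  rcases h01 i j with h1 | h1 <;> rcases h01 j k with h2 | h2 <;> rcases h01 k i with h3 | h3 <;>
    simp [h1, h2, h3]
end Main

section Shader
variable {n : ℕ} {M : Matrix (Fin n) (Fin n) ℤ}

lemma shader (hT : ∀ i j : Fin n, M i j + M j i = if i = j then 0 else 1)
    (hdet : M.det = 0) (hn : 2 ≤ n) :
    (n:ℤ) * ((n:ℤ) - 1) ≤ ∑ i : Fin n, (2 * (∑ j, M i j) - ((n:ℤ) - 1))^2 := by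
  -- work over ℚ
  set N : Matrix (Fin n) (Fin n) ℚ := M.map ((↑) : ℤ → ℚ) with hN
  have hdetN : N.det = 0 := by
    have h := RingHom.map_det (Int.castRingHom ℚ) M
    rw [hdet] at h
    simpa [hN, RingHom.mapMatrix_apply] using h.symm
  obtain ⟨x, hx0, hxv⟩ := Matrix.exists_mulVec_eq_zero_iff.mpr hdetN
  have hx : ∀ i, ∑ j, (M i j : ℚ) * x j = 0 := by
    intro i
    have := congrFun hxv i
    simpa [hN, Matrix.mulVec, dotProduct, Matrix.map_apply] using this
  set σ : ℚ := ∑ j, x j with hσdef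
  have hcompl' : ∀ j i : Fin n, (M j i : ℚ) = (if j = i then 0 else 1) - (M i j : ℚ) := by
    intro j i
    have h := hcompl hT j i
    rw [h]
    split_ifs <;> push_cast <;> ring
  have hcol : ∀ i, ∑ j, (M j i : ℚ) * x j = σ - x i := by
    intro i
    have h1 : ∀ j : Fin n, (M j i : ℚ) * x j
        = (x j - (if j = i then x j else 0)) - (M i j : ℚ) * x j := by
      intro j; rw [hcompl' j i]; split_ifs <;> ring
    rw [Finset.sum_congr rfl fun j _ => h1 j, Finset.sum_sub_distrib, Finset.sum_sub_distrib,
      Finset.sum_ite_eq' Finset.univ i (fun j => x j), hx i]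
    simp [hσdef]
  have hsq : ∑ j, x j * x j = σ^2 := by
    have w1 : ∑ i, x i * (∑ j, (M j i : ℚ) * x j) = σ^2 - ∑ j, x j * x j := by
      have h1 : ∀ i, x i * (∑ j, (M j i : ℚ) * x j) = σ * x i - x i * x i := by
        intro i; rw [hcol i]; ring
      rw [Finset.sum_congr rfl fun i _ => h1 i, Finset.sum_sub_distrib, ← Finset.mul_sum,
        ← hσdef]
      ring
    have w2 : ∑ i, x i * (∑ j, (M j i : ℚ) * x j) = 0 := by
      have swap : ∑ i, x i * (∑ j, (M j i : ℚ) * x j)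
          = ∑ j : Fin n, x j * (∑ i, (M j i : ℚ) * x i) := by
        calc ∑ i, x i * (∑ j, (M j i : ℚ) * x j)
            = ∑ i : Fin n, ∑ j, x i * ((M j i : ℚ) * x j) :=
              Finset.sum_congr rfl fun i _ => Finset.mul_sum _ _ _
          _ = ∑ j : Fin n, ∑ i, x i * ((M j i : ℚ) * x j) := Finset.sum_comm
          _ = ∑ j : Fin n, x j * (∑ i, (M j i : ℚ) * x i) := by
              refine Finset.sum_congr rfl fun j _ => ?_
              rw [Finset.mul_sum]
              exact Finset.sum_congr rfl fun i _ => by ring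
      rw [swap]
      refine Finset.sum_eq_zero fun j _ => ?_
      rw [hx j, mul_zero]
    rw [w2] at w1; linarith
  have hσ : σ ≠ 0 := by
    intro h0
    apply hx0
    have hz : ∑ j, x j * x j = 0 := by rw [hsq, h0]; ring
    have hall := (Finset.sum_eq_zero_iff_of_nonneg
      (fun j _ => mul_self_nonneg (x j))).mp hz
    funext j
    exact mul_self_eq_zero.mp (hall j (Finset.mem_univ j))
  have hxs : ∑ i, x i * (∑ j, (M i j : ℚ)) = ((n:ℚ) - 1) * σ := by
    have swap : ∑ i, x i * (∑ j, (M i j : ℚ)) = ∑ j : Fin n, ∑ i, (M i j : ℚ) * x i := by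
      calc ∑ i, x i * (∑ j, (M i j : ℚ))
          = ∑ i : Fin n, ∑ j, (M i j : ℚ) * x i := by
            refine Finset.sum_congr rfl fun i _ => ?_
            rw [Finset.mul_sum]
            exact Finset.sum_congr rfl fun j _ => by ring
        _ = ∑ j : Fin n, ∑ i, (M i j : ℚ) * x i := Finset.sum_comm
    rw [swap, Finset.sum_congr rfl fun j _ => hcol j, Finset.sum_sub_distrib,
      Finset.sum_const, Finset.card_univ, Fintype.card_fin, ← hσdef]
    ring
  have hd0 : ∑ i : Fin n, (2 * (∑ j, (M i j : ℚ)) - ((n:ℚ) - 1)) = 0 := by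
    have h2 := sumsc hT
    have h3 : (2:ℚ) * ∑ i : Fin n, ∑ j, (M i j : ℚ) = (n:ℚ) * ((n:ℚ) - 1) := by
      exact_mod_cast congrArg (fun z : ℤ => (z : ℚ)) h2
    rw [Finset.sum_sub_distrib, Finset.sum_const, Finset.card_univ, Fintype.card_fin,
      ← Finset.mul_sum]
    rw [h3]
    ring
  set g : Fin n → ℚ := fun i => 2 * (∑ j, (M i j : ℚ)) - ((n:ℚ) - 1) with hg
  set Q : ℚ := ∑ i, g i ^ 2 with hQ
  have hfg : ∑ i, ((n:ℚ) * x i - σ) * g i = (n:ℚ) * ((n:ℚ) - 1) * σ := by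
    have h1 : ∀ i, ((n:ℚ) * x i - σ) * g i
        = (n:ℚ) * (2 * (x i * (∑ j, (M i j : ℚ)))) - (n:ℚ) * ((n:ℚ)-1) * x i - σ * g i := by
      intro i; rw [hg]; ring
    rw [Finset.sum_congr rfl fun i _ => h1 i, Finset.sum_sub_distrib, Finset.sum_sub_distrib,
      ← Finset.mul_sum, ← Finset.mul_sum, ← Finset.mul_sum, ← Finset.mul_sum, hd0, hxs,
      ← hσdef]
    ring
  have hff : ∑ i, ((n:ℚ) * x i - σ)^2 = ((n:ℚ)^2 - (n:ℚ)) * σ^2 := by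
    have h1 : ∀ i, ((n:ℚ) * x i - σ)^2
        = (n:ℚ)^2 * (x i * x i) - 2*(n:ℚ)*σ * x i + σ^2 := by intro i; ring
    rw [Finset.sum_congr rfl fun i _ => h1 i, Finset.sum_add_distrib, Finset.sum_sub_distrib,
      ← Finset.mul_sum, ← Finset.mul_sum, hsq, ← hσdef, Finset.sum_const, Finset.card_univ,
      Fintype.card_fin]
    ring
  have hcs := Finset.sum_mul_sq_le_sq_mul_sq Finset.univ (fun i => (n:ℚ) * x i - σ) g
  rw [hfg, hff] at hcs
  have hQn : (n:ℚ) * ((n:ℚ) - 1) ≤ Q := by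
    have hσ2 : (0:ℚ) < σ^2 := by positivity
    have hn' : (2:ℚ) ≤ (n:ℚ) := by exact_mod_cast hn
    rw [← hQ] at hcs
    by_contra hlt
    push_neg at hlt
    have hpos : 0 < ((n:ℚ)^2 - (n:ℚ)) * σ^2 := by
      have h0 : 0 < (n:ℚ)^2 - (n:ℚ) := by nlinarith
      exact mul_pos h0 hσ2
    have h2 : ((n:ℚ)^2 - (n:ℚ)) * σ^2 * Q < ((n:ℚ)^2 - (n:ℚ)) * σ^2 * ((n:ℚ)*((n:ℚ)-1)) :=
      mul_lt_mul_of_pos_left hlt hpos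
    nlinarith [hcs, h2]
  have hcast : ((∑ i : Fin n, (2 * (∑ j, M i j) - ((n:ℤ) - 1))^2 : ℤ) : ℚ) = Q := by
    rw [hQ]
    push_cast [hg]
    rfl
  have hfin := hQn
  rw [← hcast] at hfin
  exact_mod_cast hfin
end Shader

section Wrap
variable {n : ℕ} {M : Matrix (Fin n) (Fin n) ℤ}

lemma dvd3cube (n : ℕ) : (3:ℤ) ∣ (n:ℤ)^3 - (n:ℤ) := by
  haveI : Fact (Nat.Prime 3) := ⟨by norm_num⟩
  have h : ((((n:ℤ)^3 - (n:ℤ)) : ℤ) : ZMod 3) = 0 := by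
    push_cast
    rw [show ((n:ZMod 3))^3 = (n : ZMod 3) from ZMod.pow_card _]
    ring
  exact_mod_cast (ZMod.intCast_zmod_eq_zero_iff_dvd _ 3).mp h

lemma choose3 (n : ℕ) : 6 * n.choose 3 = (n-2) * ((n-1) * n) := by
  have h := Nat.descFactorial_eq_factorial_mul_choose n 3
  have h2 : n.descFactorial 3 = (n-2) * ((n-1) * n) := by
    simp [Nat.descFactorial_succ, Nat.descFactorial_zero]
  rw [h2] at h
  simpa [Nat.factorial] using h.symm

lemma card3 (h01 : ∀ i j : Fin n, M i j = 0 ∨ M i j = 1)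
    (hT : ∀ i j : Fin n, M i j + M j i = if i = j then 0 else 1) :
    3 ∣ (Finset.univ.filter (fun p : Fin n × Fin n × Fin n =>
        M p.1 p.2.1 = 1 ∧ M p.2.1 p.2.2 = 1 ∧ M p.2.2 p.1 = 1)).card := by
  have hcT := card_eq_T h01
  have hm := master h01 hT
  rw [← hcT] at hm
  have h3 := dvd3cube n
  have : (3:ℤ) ∣ ((Finset.univ.filter (fun p : Fin n × Fin n × Fin n =>
      M p.1 p.2.1 = 1 ∧ M p.2.1 p.2.2 = 1 ∧ M p.2.2 p.1 = 1)).card : ℤ) := by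
    obtain ⟨a, ha⟩ := h3
    omega
  exact_mod_cast this

lemma choose3Z (hn : 2 ≤ n) :
    ((6 * n.choose 3 : ℕ) : ℤ) = (n:ℤ) * ((n:ℤ)-1) * ((n:ℤ)-2) := by
  rw [choose3 n]
  push_cast [Nat.cast_sub (by omega : 1 ≤ n), Nat.cast_sub (by omega : 2 ≤ n)]
  ring

lemma upper_main (hTour : IsTournament M) (hdet : M.det = 0) (hn : 2 ≤ n) :
    4 * C3 M ≤ n.choose 3 := by
  obtain ⟨h01, heq⟩ := hTour
  have hT := hrel heq
  have hcT := card_eq_T h01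
  have hm := master h01 hT
  have hs := shader hT hdet hn
  have h3 := card3 h01 hT
  set c := (Finset.univ.filter (fun p : Fin n × Fin n × Fin n =>
      M p.1 p.2.1 = 1 ∧ M p.2.1 p.2.2 = 1 ∧ M p.2.2 p.1 = 1)).card with hc
  have hC3 : C3 M = c / 3 := rfl
  have h8 : 8 * (c:ℤ) ≤ (n:ℤ) * ((n:ℤ)-1) * ((n:ℤ)-2) := by
    rw [hcT, hm]
    nlinarith [hs]
  have hch := choose3Z (n := n) hn
  obtain ⟨a, ha⟩ := h3
  have hdiv : c / 3 = a := by omega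
  have hcz : (c:ℤ) = 3 * (a:ℤ) := by exact_mod_cast ha
  have hfin : (24:ℤ) * (a:ℤ) ≤ 6 * ((n.choose 3 : ℕ) : ℤ) := by
    push_cast at hch
    omega
  rw [hC3, hdiv]
  omega

lemma eq_main (hTour : IsTournament M) (hn : 2 ≤ n)
    (hS : ∑ i : Fin n, (2 * (∑ j, M i j) - ((n:ℤ) - 1))^2 = (n:ℤ) * ((n:ℤ)-1)) :
    4 * C3 M = n.choose 3 := by
  obtain ⟨h01, heq⟩ := hTour
  have hT := hrel heq
  have hcT := card_eq_T h01
  have hm := master h01 hT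
  have h3 := card3 h01 hT
  set c := (Finset.univ.filter (fun p : Fin n × Fin n × Fin n =>
      M p.1 p.2.1 = 1 ∧ M p.2.1 p.2.2 = 1 ∧ M p.2.2 p.1 = 1)).card with hc
  have hC3 : C3 M = c / 3 := rfl
  have h8 : 8 * (c:ℤ) = (n:ℤ) * ((n:ℤ)-1) * ((n:ℤ)-2) := by
    rw [hcT, hm, hS]
    ring
  have hch := choose3Z (n := n) hn
  obtain ⟨a, ha⟩ := h3
  have hdiv : c / 3 = a := by omega
  have hcz : (c:ℤ) = 3 * (a:ℤ) := by exact_mod_cast ha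
  have hfin : (24:ℤ) * (a:ℤ) = 6 * ((n.choose 3 : ℕ) : ℤ) := by
    push_cast at hch
    omega
  rw [hC3, hdiv]
  omega
end Wrap

section Construction

/-- Entry function of the extremal tournament. -/
def gm (n a b : ℕ) : ℤ :=
  if a = b then 0
  else if b = n - 1 then 1
  else if a = n - 1 then 0
  else if (a < b ∧ b - a ≤ n/2 - 1) ∨ (b < a ∧ n/2 - 1 < a - b) then 1 else 0

def EM (n : ℕ) : Matrix (Fin n) (Fin n) ℤ := fun i j => gm n i.val j.val

lemma EM01 (n : ℕ) : ∀ i j : Fin n, EM n i j = 0 ∨ EM n i j = 1 := by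
  intro i j
  unfold EM gm
  split_ifs <;> simp

lemma EMrel {n m : ℕ} (hm2 : n = 2*m+2) :
    ∀ i j : Fin n, EM n i j + EM n j i = if i = j then 0 else 1 := by
  intro i j
  have hi := i.isLt
  have hj := j.isLt
  unfold EM gm
  simp only [Fin.ext_iff]
  split_ifs <;> omega

lemma EMtour {n m : ℕ} (hm2 : n = 2*m+2) : IsTournament (EM n) := by
  refine ⟨EM01 n, ?_⟩
  ext i j
  simp only [Matrix.add_apply, Matrix.transpose_apply, Matrix.of_apply]
  exact EMrel hm2 i j

lemma rowzero {n : ℕ} (b : ℕ) : gm n (n-1) b = 0 := by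
  unfold gm
  split_ifs <;> omega

lemma EMdet {n : ℕ} (hpos : 0 < n) : (EM n).det = 0 := by
  apply Matrix.det_eq_zero_of_row_eq_zero (⟨n-1, by omega⟩ : Fin n)
  intro j
  show gm n (n-1) j.val = 0
  exact rowzero j.val

lemma sc_circle {n m : ℕ} (hm2 : n = 2*m+2) (a : ℕ) (ha : a < n - 1) :
    ∑ b ∈ Finset.range n, gm n a b = (m:ℤ) + 1 := by
  have hpoint : ∀ b ∈ Finset.range n, gm n a b
      = if (b = n-1 ∨ (a < b ∧ b - a ≤ m ∧ b ≠ n - 1) ∨ (b < a ∧ m < a - b)) then 1 else 0 := by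
    intro b hb
    rw [Finset.mem_range] at hb
    unfold gm
    split_ifs <;> omega
  rw [Finset.sum_congr rfl hpoint, Finset.sum_boole]
  have hset : (Finset.range n).filter
      (fun b => b = n-1 ∨ (a < b ∧ b - a ≤ m ∧ b ≠ n - 1) ∨ (b < a ∧ m < a - b))
      = insert (n-1) ((Finset.Ioc a (min (a+m) (2*m))) ∪ Finset.range (a-m)) := by
    ext b
    simp only [Finset.mem_filter, Finset.mem_range, Finset.mem_insert, Finset.mem_Ioc,
      Finset.mem_union, lt_min_iff, le_min_iff]
    omega
  have hnotmem : n - 1 ∉ (Finset.Ioc a (min (a+m) (2*m))) ∪ Finset.range (a-m) := by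
    simp only [Finset.mem_union, Finset.mem_Ioc, Finset.mem_range, le_min_iff]
    omega
  have hdisj : Disjoint (Finset.Ioc a (min (a+m) (2*m))) (Finset.range (a-m)) := by
    rw [Finset.disjoint_left]
    intro b hb1 hb2
    simp only [Finset.mem_Ioc, le_min_iff] at hb1
    simp only [Finset.mem_range] at hb2
    omega
  have hcard : ((Finset.range n).filter
      (fun b => b = n-1 ∨ (a < b ∧ b - a ≤ m ∧ b ≠ n - 1) ∨ (b < a ∧ m < a - b))).card
      = m + 1 := by
    rw [hset, Finset.card_insert_of_notMem hnotmem, Finset.card_union_of_disjoint hdisj,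
      Nat.card_Ioc, Finset.card_range]
    omega
  rw [hcard]
  push_cast
  ring

lemma sc_fin {n m : ℕ} (hm2 : n = 2*m+2) (i : Fin n) (hi : i.val < n - 1) :
    ∑ j, EM n i j = (m:ℤ) + 1 := by
  rw [show (∑ j : Fin n, EM n i j) = ∑ b ∈ Finset.range n, gm n i.val b from
    Fin.sum_univ_eq_sum_range (fun b => gm n i.val b) n]
  exact sc_circle hm2 i.val hi

lemma EMsum {n m : ℕ} (hm2 : n = 2*m+2) :
    ∑ i : Fin n, (2 * (∑ j, EM n i j) - ((n:ℤ) - 1))^2 = (n:ℤ) * ((n:ℤ)-1) := by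
  have hpt : ∀ i : Fin n, (2 * (∑ j, EM n i j) - ((n:ℤ) - 1))^2
      = if i = (⟨n-1, by omega⟩ : Fin n) then ((n:ℤ)-1)^2 else 1 := by
    intro i
    by_cases h : i = (⟨n-1, by omega⟩ : Fin n)
    · have hz : ∑ j, EM n i j = 0 := Finset.sum_eq_zero fun j _ => by
        show gm n i.val j.val = 0
        rw [h]
        exact rowzero j.val
      rw [hz, if_pos h]
      ring
    · have hlt : i.val < n - 1 := by
        have h2 := i.isLt
        have h3 : i.val ≠ n - 1 := fun hv => h (Fin.ext hv)
        omega
      rw [sc_fin hm2 i hlt, if_neg h]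
      have hn : (n:ℤ) = 2*(m:ℤ)+2 := by exact_mod_cast congrArg (Nat.cast : ℕ → ℤ) hm2
      rw [hn]
      ring
  have hsplit : ∀ i : Fin n, (if i = (⟨n-1, by omega⟩ : Fin n) then ((n:ℤ)-1)^2 else 1)
      = 1 + (if i = (⟨n-1, by omega⟩ : Fin n) then ((n:ℤ)-1)^2 - 1 else 0) := by
    intro i
    split_ifs <;> ring
  rw [Finset.sum_congr rfl fun i _ => hpt i, Finset.sum_congr rfl fun i _ => hsplit i,
    Finset.sum_add_distrib, Finset.sum_const, Finset.card_univ, Fintype.card_fin,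
    Finset.sum_ite_eq' Finset.univ (⟨n-1, by omega⟩ : Fin n) (fun _ => ((n:ℤ)-1)^2 - 1)]
  simp only [Finset.mem_univ, if_true, smul_eq_mul, mul_one]
  ring

end Construction

theorem stmt5 (n : ℕ) (hn : Even n) (hpos : 0 < n) :
    (∀ M : Matrix (Fin n) (Fin n) ℤ, IsTournament M → M.det = 0 →
      4 * C3 M ≤ n.choose 3) ∧
    (∃ M : Matrix (Fin n) (Fin n) ℤ, IsTournament M ∧ M.det = 0 ∧
      4 * C3 M = n.choose 3) := by
  obtain ⟨k, hk⟩ := hn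
  have hn2 : 2 ≤ n := by omega
  have hm2 : n = 2*(k-1)+2 := by omega
  constructor
  · intro M hT hdet
    exact upper_main hT hdet hn2
  · exact ⟨EM n, EMtour hm2, EMdet (by omega),
      eq_main (EMtour hm2) hn2 (EMsum hm2)⟩
end

section
/- If M is a tournament matrix of order n ≥ 6 that is not strongly connected and each of its strongly connected components contains at least 3 vertices, then C_3(M) ≤ (1/4)·C(n-2,3) + 1. -/
open scoped Classical

section Aux
variable {n : ℕ} {M : Matrix (Fin n) (Fin n) ℤ}

lemma tdiag (hM : IsTournament M) (i : Fin n) : M i i = 0 := by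
  have := congrFun (congrFun hM.2 i) i
  simp [Matrix.add_apply, Matrix.transpose_apply] at this
  linarith

lemma tsum' (hM : IsTournament M) {i j : Fin n} (h : i ≠ j) : M i j + M j i = 1 := by
  have := congrFun (congrFun hM.2 i) j
  simpa [Matrix.add_apply, Matrix.transpose_apply, h] using this

lemma tmul (hM : IsTournament M) (i j : Fin n) : M i j * M j i = 0 := by
  rcases eq_or_ne i j with rfl | h
  · simp [tdiag hM]
  · rcases hM.1 i j with h0 | h1
    · simp [h0]
    · have := tsum' hM h
      have : M j i = 0 := by linarith
      simp [this]

lemma tsq (hM : IsTournament M) (i j : Fin n) : M i j * M i j = M i j := by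
  rcases hM.1 i j with h0 | h0 <;> simp [h0]

lemma tcyc (hM : IsTournament M) {i k : Fin n} : M k i + M i k = if k = i then 0 else 1 := by
  rcases eq_or_ne k i with rfl | h
  · simp [tdiag hM]
  · simp [h, tsum' hM h]

lemma moon (hM : IsTournament M) (A : Finset (Fin n)) :
    8 * ((((A ×ˢ A ×ˢ A)).filter (fun p : Fin n × Fin n × Fin n =>
        M p.1 p.2.1 = 1 ∧ M p.2.1 p.2.2 = 1 ∧ M p.2.2 p.1 = 1)).card : ℤ)
      ≤ (A.card : ℤ) ^ 3 - A.card := by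
  set a : ℤ := (A.card : ℤ) with ha_def
  set s : Fin n → ℤ := fun i => ∑ j ∈ A, M i j with hs_def
  set r : Fin n → ℤ := fun j => ∑ i ∈ A, M i j with hr_def
  set T : ℤ := ∑ i ∈ A, ∑ j ∈ A, ∑ k ∈ A, M i j * M j k * M k i with hT_def
  set P : ℤ := ∑ i ∈ A, ∑ j ∈ A, ∑ k ∈ A, M i j * M j k * M i k with hP_def
  have hcard : ((((A ×ˢ A ×ˢ A)).filter (fun p : Fin n × Fin n × Fin n =>
        M p.1 p.2.1 = 1 ∧ M p.2.1 p.2.2 = 1 ∧ M p.2.2 p.1 = 1)).card : ℤ) = T := by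
    rw [Finset.card_filter]
    push_cast
    rw [Finset.sum_product]
    refine Finset.sum_congr rfl (fun i _ => ?_)
    rw [Finset.sum_product]
    refine Finset.sum_congr rfl (fun j _ => Finset.sum_congr rfl (fun k _ => ?_))
    rcases hM.1 i j with h1 | h1 <;> rcases hM.1 j k with h2 | h2 <;>
      rcases hM.1 k i with h3 | h3 <;> simp [h1, h2, h3]
  rw [hcard]
  -- sum of scores
  have hrs : ∀ j ∈ A, r j + s j = a - 1 := by
    intro j hj
    have : r j + s j = ∑ i ∈ A, (M i j + M j i) := by
      rw [Finset.sum_add_distrib]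
    rw [this]
    have : ∀ i ∈ A, M i j + M j i = if i = j then 0 else 1 := fun i _ => tcyc hM
    rw [Finset.sum_congr rfl this]
    have : ∀ x ∈ A, (if x = j then (0:ℤ) else 1) = 1 - (if x = j then 1 else 0) := by
      intro x _; split <;> ring
    rw [Finset.sum_congr rfl this, Finset.sum_sub_distrib, Finset.sum_const,
      Finset.sum_ite_eq' A j (fun _ => (1:ℤ)), if_pos hj]
    simp [ha_def]
  -- score sums
  set σ : ℤ := ∑ j ∈ A, s j with hσ_def
  set q : ℤ := ∑ i ∈ A, s i * s i with hq_def
  have hσr : ∑ j ∈ A, r j = σ := by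
    rw [hσ_def, hr_def, hs_def]
    exact Finset.sum_comm
  have hσ2 : 2 * σ = a ^ 2 - a := by
    have h1 : 2 * σ = ∑ j ∈ A, (r j + s j) := by
      rw [Finset.sum_add_distrib, hσr]; ring
    rw [h1, Finset.sum_congr rfl hrs, Finset.sum_const, nsmul_eq_mul]
    rw [ha_def]; ring
  have hcs : σ ^ 2 ≤ a * q := by
    have h := sq_sum_le_card_mul_sum_sq (s := A) (f := s)
    have hq' : ∑ i ∈ A, s i ^ 2 = q := by
      rw [hq_def]; exact Finset.sum_congr rfl fun i _ => sq (s i) ▸ (by ring)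
    rw [hq'] at h
    exact_mod_cast h
  -- T + P
  have hTP : T + P = ∑ j ∈ A, r j * s j := by
    have h1 : T + P = ∑ i ∈ A, ∑ j ∈ A, ∑ k ∈ A, M i j * M j k * (M k i + M i k) := by
      rw [hT_def, hP_def, ← Finset.sum_add_distrib]
      refine Finset.sum_congr rfl fun i _ => ?_
      rw [← Finset.sum_add_distrib]
      refine Finset.sum_congr rfl fun j _ => ?_
      rw [← Finset.sum_add_distrib]
      exact Finset.sum_congr rfl fun k _ => by ring
    have h2 : ∀ i ∈ A, ∀ j ∈ A, ∑ k ∈ A, M i j * M j k * (M k i + M i k)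
        = M i j * s j := by
      intro i hi j hj
      have hpt : ∀ k ∈ A, M i j * M j k * (M k i + M i k)
          = M i j * M j k - (if k = i then M i j * M j k else 0) := by
        intro k _
        rw [tcyc hM]
        split <;> ring
      rw [Finset.sum_congr rfl hpt, Finset.sum_sub_distrib,
        Finset.sum_ite_eq' A i (fun k => M i j * M j k), if_pos hi]
      have : M i j * M j i = 0 := tmul hM i j
      rw [this, hs_def, Finset.mul_sum]
      ring
    have h3 : T + P = ∑ i ∈ A, ∑ j ∈ A, M i j * s j := by
      rw [h1]
      exact Finset.sum_congr rfl fun i hi => Finset.sum_congr rfl fun j hj => h2 i hi j hj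
    rw [h3, Finset.sum_comm]
    refine Finset.sum_congr rfl fun j _ => ?_
    rw [hr_def, Finset.sum_mul]
  -- 2P
  have hP2 : 2 * P = q - σ := by
    have hswap : P = ∑ i ∈ A, ∑ j ∈ A, ∑ k ∈ A, M i k * M k j * M i j := by
      rw [hP_def]
      exact Finset.sum_congr rfl fun i _ => Finset.sum_comm
    have h1 : 2 * P = ∑ i ∈ A, ∑ j ∈ A, ∑ k ∈ A, M i j * M i k * (M j k + M k j) := by
      nth_rewrite 1 [two_mul]
      nth_rewrite 2 [hswap]
      rw [hP_def, ← Finset.sum_add_distrib]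
      refine Finset.sum_congr rfl fun i _ => ?_
      rw [← Finset.sum_add_distrib]
      refine Finset.sum_congr rfl fun j _ => ?_
      rw [← Finset.sum_add_distrib]
      exact Finset.sum_congr rfl fun k _ => by ring
    have h2 : ∀ i ∈ A, ∀ j ∈ A, ∑ k ∈ A, M i j * M i k * (M j k + M k j)
        = M i j * s i - M i j := by
      intro i hi j hj
      have hpt : ∀ k ∈ A, M i j * M i k * (M j k + M k j)
          = M i j * M i k - (if k = j then M i j * M i k else 0) := by
        intro k _
        have : M j k + M k j = if j = k then 0 else 1 := tcyc hM
        rw [this]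
        rcases eq_or_ne j k with rfl | hne
        · simp
        · rw [if_neg hne, if_neg (Ne.symm hne)]; ring
      rw [Finset.sum_congr rfl hpt, Finset.sum_sub_distrib,
        Finset.sum_ite_eq' A j (fun k => M i j * M i k), if_pos hj]
      rw [tsq hM, hs_def, Finset.mul_sum]
    have h3 : 2 * P = ∑ i ∈ A, (s i * s i - s i) := by
      rw [h1]
      refine Finset.sum_congr rfl fun i hi => ?_
      rw [Finset.sum_congr rfl (h2 i hi), Finset.sum_sub_distrib, ← Finset.sum_mul, hs_def]
    rw [h3, Finset.sum_sub_distrib, hq_def, hσ_def]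
  -- rewrite r in hTP
  have hRS : ∑ j ∈ A, r j * s j = (a - 1) * σ - q := by
    have hpt : ∀ j ∈ A, r j * s j = (a - 1) * s j - s j * s j := by
      intro j hj
      have : r j = a - 1 - s j := by linarith [hrs j hj]
      rw [this]; ring
    rw [Finset.sum_congr rfl hpt, Finset.sum_sub_distrib, ← Finset.mul_sum, hq_def, hσ_def]
  have hTP2 : T + P = (a - 1) * σ - q := by rw [hTP, hRS]
  have h2T : 2 * T = 2 * (a - 1) * σ + σ - 3 * q := by linear_combination 2 * hTP2 - hP2
  -- finish
  rcases Finset.eq_empty_or_nonempty A with rfl | hAne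
  · have h0 : a = 0 := by simp [ha_def]
    have hT0 : T = 0 := by simp [hT_def]
    rw [h0, hT0]; norm_num
  · have ha1 : (1 : ℤ) ≤ a := by
      rw [ha_def]
      exact_mod_cast Finset.card_pos.mpr hAne
    have ha0 : (0 : ℤ) < a := by linarith
    have hq12 : 12 * σ ^ 2 ≤ 12 * (a * q) := by linarith [hcs]
    have e1 : 8 * a * T + 12 * (a * q) = (4 * a ^ 2 - 2 * a) * (2 * σ) := by
      linear_combination 4 * a * h2T
    have e2 : 12 * σ ^ 2 = 3 * (a ^ 2 - a) ^ 2 := by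
      have : (2 * σ) ^ 2 = (a ^ 2 - a) ^ 2 := by rw [hσ2]
      linarith [this]
    have e3 : (4 * a ^ 2 - 2 * a) * (a ^ 2 - a) - 3 * (a ^ 2 - a) ^ 2 = a ^ 4 - a ^ 2 := by
      ring
    have key : 8 * a * T ≤ a ^ 4 - a ^ 2 := by
      rw [hσ2] at e1
      linarith [e1, hq12, e2, e3]
    have : a * (8 * T) ≤ a * (a ^ 3 - a) := by linarith [key]
    linarith [le_of_mul_le_mul_left this ha0]

lemma ch2' (k : ℕ) : 2 * (((k+1).choose 2 : ℕ) : ℤ) = (k+1) * k := by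
  induction k with
  | zero => simp
  | succ k ih =>
    rw [show k+1+1 = (k+1)+1 from rfl, Nat.choose_succ_succ, Nat.choose_one_right]
    push_cast
    push_cast at ih
    linear_combination ih

lemma ch3' (k : ℕ) : 6 * (((k+2).choose 3 : ℕ) : ℤ) = (k+2) * (k+1) * k := by
  induction k with
  | zero => simp
  | succ k ih =>
    rw [show k+1+2 = (k+2)+1 from rfl, Nat.choose_succ_succ]
    push_cast
    push_cast at ih
    have h2 := ch2' (k+1)
    push_cast at h2
    linear_combination ih + 3 * h2

end Aux

theorem stmt15 (n : ℕ) (hn : 6 ≤ n) (M : Matrix (Fin n) (Fin n) ℤ)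
    (hM : IsTournament M) (hns : ¬ ∀ i j, SConn M i j)
    (hcomp : ∀ V ∈ sccs M, 3 ≤ V.card) :
    4 * C3 M ≤ (n - 2).choose 3 + 4 := by
  push_neg at hns
  obtain ⟨u, v, huv⟩ := hns
  have hpq : ∃ p q : Fin n, ¬ Relation.ReflTransGen (fun a b => M a b = 1) p q := by
    rcases not_and_or.mp huv with h | h
    · exact ⟨u, v, h⟩
    · exact ⟨v, u, h⟩
  obtain ⟨p, q, hpq⟩ := hpq
  set A : Finset (Fin n) :=
    Finset.univ.filter (fun k => Relation.ReflTransGen (fun a b => M a b = 1) k q) with hA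
  have hmemA : ∀ k, k ∈ A ↔ Relation.ReflTransGen (fun a b => M a b = 1) k q := by
    intro k; simp [hA]
  have hBA : ∀ b a : Fin n, b ∉ A → a ∈ A → M b a = 0 := by
    intro b a hb ha
    rcases hM.1 b a with h0 | h1
    · exact h0
    · exfalso
      exact hb ((hmemA b).mpr (Relation.ReflTransGen.head h1 ((hmemA a).mp ha)))
  have hA3 : 3 ≤ A.card := by
    have hmem : Finset.univ.filter (fun j => SConn M q j) ∈ sccs M :=
      Finset.mem_image_of_mem _ (Finset.mem_univ q)
    have hsub : Finset.univ.filter (fun j => SConn M q j) ⊆ A := by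
      intro k hk
      simp only [Finset.mem_filter, Finset.mem_univ, true_and] at hk
      exact (hmemA k).mpr hk.2
    exact le_trans (hcomp _ hmem) (Finset.card_le_card hsub)
  have hB3 : 3 ≤ Aᶜ.card := by
    have hmem : Finset.univ.filter (fun j => SConn M p j) ∈ sccs M :=
      Finset.mem_image_of_mem _ (Finset.mem_univ p)
    have hsub : Finset.univ.filter (fun j => SConn M p j) ⊆ Aᶜ := by
      intro k hk
      simp only [Finset.mem_filter, Finset.mem_univ, true_and] at hk
      rw [Finset.mem_compl]
      intro hkA
      exact hpq (Relation.ReflTransGen.trans hk.1 ((hmemA k).mp hkA))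
    exact le_trans (hcomp _ hmem) (Finset.card_le_card hsub)
  have hcards : A.card + Aᶜ.card = n := by
    simpa using Finset.card_add_card_compl A
  -- splitting the cycle set
  have hsplit : (Finset.univ.filter (fun t : Fin n × Fin n × Fin n =>
        M t.1 t.2.1 = 1 ∧ M t.2.1 t.2.2 = 1 ∧ M t.2.2 t.1 = 1))
      = ((A ×ˢ A ×ˢ A).filter (fun t : Fin n × Fin n × Fin n =>
        M t.1 t.2.1 = 1 ∧ M t.2.1 t.2.2 = 1 ∧ M t.2.2 t.1 = 1))
      ∪ ((Aᶜ ×ˢ Aᶜ ×ˢ Aᶜ).filter (fun t : Fin n × Fin n × Fin n =>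
        M t.1 t.2.1 = 1 ∧ M t.2.1 t.2.2 = 1 ∧ M t.2.2 t.1 = 1)) := by
    ext ⟨i, j, k⟩
    simp only [Finset.mem_filter, Finset.mem_univ, Finset.mem_union, Finset.mem_product,
      Finset.mem_compl, true_and]
    constructor
    · rintro ⟨h1, h2, h3⟩
      by_cases hi : i ∈ A <;> by_cases hj : j ∈ A <;> by_cases hk : k ∈ A
      · exact Or.inl ⟨⟨hi, hj, hk⟩, h1, h2, h3⟩
      · rw [hBA k i hk hi] at h3; exact absurd h3 (by norm_num)
      · rw [hBA j k hj hk] at h2; exact absurd h2 (by norm_num)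
      · rw [hBA k i hk hi] at h3; exact absurd h3 (by norm_num)
      · rw [hBA i j hi hj] at h1; exact absurd h1 (by norm_num)
      · rw [hBA i j hi hj] at h1; exact absurd h1 (by norm_num)
      · rw [hBA j k hj hk] at h2; exact absurd h2 (by norm_num)
      · exact Or.inr ⟨⟨hi, hj, hk⟩, h1, h2, h3⟩
    · rintro (⟨_, hc⟩ | ⟨_, hc⟩) <;> exact hc
  have hdisj : Disjoint ((A ×ˢ A ×ˢ A).filter (fun t : Fin n × Fin n × Fin n =>
        M t.1 t.2.1 = 1 ∧ M t.2.1 t.2.2 = 1 ∧ M t.2.2 t.1 = 1))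
      ((Aᶜ ×ˢ Aᶜ ×ˢ Aᶜ).filter (fun t : Fin n × Fin n × Fin n =>
        M t.1 t.2.1 = 1 ∧ M t.2.1 t.2.2 = 1 ∧ M t.2.2 t.1 = 1)) := by
    rw [Finset.disjoint_left]
    rintro ⟨i, j, k⟩ h1 h2
    simp only [Finset.mem_filter, Finset.mem_product, Finset.mem_compl] at h1 h2
    exact h2.1.1 h1.1.1
  have hcardsplit : (Finset.univ.filter (fun t : Fin n × Fin n × Fin n =>
        M t.1 t.2.1 = 1 ∧ M t.2.1 t.2.2 = 1 ∧ M t.2.2 t.1 = 1)).card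
      = ((A ×ˢ A ×ˢ A).filter (fun t : Fin n × Fin n × Fin n =>
        M t.1 t.2.1 = 1 ∧ M t.2.1 t.2.2 = 1 ∧ M t.2.2 t.1 = 1)).card
      + ((Aᶜ ×ˢ Aᶜ ×ˢ Aᶜ).filter (fun t : Fin n × Fin n × Fin n =>
        M t.1 t.2.1 = 1 ∧ M t.2.1 t.2.2 = 1 ∧ M t.2.2 t.1 = 1)).card := by
    rw [hsplit, Finset.card_union_of_disjoint hdisj]
  have mA := moon hM A
  have mB := moon hM Aᶜ
  set α : ℤ := (A.card : ℤ) with hα_def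
  set β : ℤ := (Aᶜ.card : ℤ) with hβ_def
  have hα3 : (3 : ℤ) ≤ α := by rw [hα_def]; exact_mod_cast hA3
  have hβ3 : (3 : ℤ) ≤ β := by rw [hβ_def]; exact_mod_cast hB3
  have hαβ : α + β = (n : ℤ) := by rw [hα_def, hβ_def]; exact_mod_cast hcards
  have h8 : 8 * (((Finset.univ.filter (fun t : Fin n × Fin n × Fin n =>
        M t.1 t.2.1 = 1 ∧ M t.2.1 t.2.2 = 1 ∧ M t.2.2 t.1 = 1)).card : ℕ) : ℤ)
      ≤ (α ^ 3 - α) + (β ^ 3 - β) := by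
    rw [hcardsplit]
    push_cast
    linarith [mA, mB]
  -- choose arithmetic
  have h6 : ((n - 6 : ℕ) : ℤ) = (n : ℤ) - 6 := by omega
  have hch : 6 * (((n - 2).choose 3 : ℕ) : ℤ)
      = ((n : ℤ) - 2) * ((n : ℤ) - 3) * ((n : ℤ) - 4) := by
    rw [show n - 2 = (n - 6 + 2) + 2 by omega, ch3' (n - 6 + 2)]
    push_cast [h6]
    ring
  have hkey : 8 * (((Finset.univ.filter (fun t : Fin n × Fin n × Fin n =>
        M t.1 t.2.1 = 1 ∧ M t.2.1 t.2.2 = 1 ∧ M t.2.2 t.1 = 1)).card : ℕ) : ℤ)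
      ≤ 6 * (((n - 2).choose 3 : ℕ) : ℤ) + 24 := by
    have hprod : (0 : ℤ) ≤ (α - 3) * (β - 3) * (α + β) :=
      mul_nonneg (mul_nonneg (by linarith) (by linarith)) (by linarith)
    have hch2 : 6 * (((n - 2).choose 3 : ℕ) : ℤ)
        = (α + β - 2) * (α + β - 3) * (α + β - 4) := by
      rw [hch, ← hαβ]
    rw [hch2]
    nlinarith [hprod, h8]
  have hN8 : 8 * (Finset.univ.filter (fun t : Fin n × Fin n × Fin n =>
        M t.1 t.2.1 = 1 ∧ M t.2.1 t.2.2 = 1 ∧ M t.2.2 t.1 = 1)).card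
      ≤ 6 * ((n - 2).choose 3) + 24 := by exact_mod_cast hkey
  unfold C3
  omega
end
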